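/- arXiv:2504.01734 — 2 statements merged into one kernel-verified Lean document; each statement's English description precedes it below -/
import Mathlib

section
/- Fix 0 < r_e < r_c, let ε ∈ (0, r_e/2), set r_C = r_e − 2ε, define Λ_ε > 0 by 3/Λ_ε = (r_C + r_e + r_c)² − (r_C r_e + r_C r_c + r_e r_c), and define F_ε(r) = −(Λ_ε/(3r²))(r − r_C)(r − r_e)(r − r_c)(r + r_C + r_e + r_c). Then the surface gravity of the Cauchy horizon κ_C,ε := (1/2)|F_ε'(r_C)| satisfies κ_C,ε = ε·ϰ/r_e² + O(ε²) as ε → 0, where ϰ = (r_c² + 2 r_e r_c − 3 r_e²)/(r_c² + 2 r_e r_c + 3 r_e²). -/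
set_option maxHeartbeats 1600000 in
/-- Surface gravity of the Cauchy horizon of near-extremal RNdS:
`κ_{C,ε} = ε ϰ / r_e² + O(ε²)` as `ε → 0`. -/
theorem cauchy_horizon_surface_gravity_asymptotics
    (re rc : ℝ) (h0 : 0 < re) (h1 : re < rc) :
    ∃ C > 0, ∃ ε₁ ∈ Set.Ioc 0 (re / 2), ∀ ε ∈ Set.Ioo (0:ℝ) ε₁,
      let rC := re - 2 * ε
      let Λ := 3 / ((rC + re + rc) ^ 2 - (rC * re + rC * rc + re * rc))
      let F := fun r : ℝ =>
        -(Λ / (3 * r ^ 2)) * (r - rC) * (r - re) * (r - rc) * (r + rC + re + rc)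
      let κ := (1 / 2) * |deriv F rC|
      |κ - ε * ((rc ^ 2 + 2 * re * rc - 3 * re ^ 2) /
          (rc ^ 2 + 2 * re * rc + 3 * re ^ 2)) / re ^ 2| ≤ C * ε ^ 2 := by
  have hrc : 0 < rc := h0.trans h1
  set Q0 : ℝ := rc ^ 2 + 2 * re * rc + 3 * re ^ 2 with hQ0
  set N0 : ℝ := rc ^ 2 + 2 * re * rc - 3 * re ^ 2 with hN0
  have hQ0pos : 0 < Q0 := by positivity
  set S : ℝ := 3 * re + rc with hS
  have hSpos : 0 < S := by positivity
  -- the correction polynomial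
  set P : ℝ → ℝ := fun x =>
    ((10*re-2*rc)*Q0*re^2 + N0*(4*re*Q0+2*re^2*S))
      + (-(8*Q0*re^2) - N0*(4*Q0+8*re*S+4*re^2)) * x
      + (N0*(40*re+8*rc)) * x^2 + (-(16*N0)) * x^3 with hP
  have hPcont : ContinuousOn P (Set.Icc (0:ℝ) re) := by fun_prop
  obtain ⟨M, hM⟩ := (isCompact_Icc (a := (0:ℝ)) (b := re)).exists_bound_of_continuousOn hPcont
  have hM0 : 0 ≤ M := le_trans (norm_nonneg _) (hM 0 ⟨le_refl _, h0.le⟩)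
  have hdminpos : 0 < (Q0/2) * (re/2)^2 * (Q0 * re^2) := by positivity
  refine ⟨(M+1) / ((Q0/2) * (re/2)^2 * (Q0 * re^2)), by positivity,
    min (re/4) (Q0/(4*S)), ⟨lt_min (by positivity) (by positivity),
      le_trans (min_le_left _ _) (by linarith)⟩, ?_⟩
  intro ε hε
  obtain ⟨hε0, hεlt⟩ := hε
  have hεre : ε < re/4 := lt_of_lt_of_le hεlt (min_le_left _ _)
  have hεQ : ε * (4*S) ≤ Q0 := by
    have := lt_of_lt_of_le hεlt (min_le_right _ _)
    rw [lt_div_iff₀ (by positivity)] at this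
    linarith
  have hrC : 0 < re - 2*ε := by linarith
  simp only []
  -- denominator q
  set q : ℝ := (re - 2 * ε + re + rc) ^ 2 - ((re - 2 * ε) * re + (re - 2 * ε) * rc + re * rc) with hq
  have hqhalf : Q0/2 ≤ q := by rw [hq, hQ0]; nlinarith [sq_nonneg ε]
  have hqpos : 0 < q := lt_of_lt_of_le (by linarith) hqhalf
  -- derivative computation
  set G : ℝ → ℝ := fun r => -(3 / q / (3 * r ^ 2)) * ((r - re) * (r - rc) * (r + (re - 2 * ε) + re + rc)) with hG
  have hFG : (fun r : ℝ =>
      -(3 / q / (3 * r ^ 2)) * (r - (re - 2 * ε)) * (r - re) * (r - rc) * (r + (re - 2 * ε) + re + rc))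
      = fun r => (r - (re - 2 * ε)) * G r := by
    funext r; rw [hG]; ring
  have hGd : DifferentiableAt ℝ G (re - 2*ε) := by
    rw [hG]
    have h3 : (3:ℝ) * (re - 2*ε)^2 ≠ 0 := by positivity
    have hden : DifferentiableAt ℝ (fun r:ℝ => 3 * r^2) (re-2*ε) := by fun_prop
    exact (((differentiableAt_const (3/q)).div hden h3).neg).mul (by fun_prop)
  have hDer : HasDerivAt (fun r : ℝ =>
      -(3 / q / (3 * r ^ 2)) * (r - (re - 2 * ε)) * (r - re) * (r - rc) * (r + (re - 2 * ε) + re + rc))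
      (1 * G (re - 2*ε) + ((re - 2*ε) - (re - 2*ε)) * deriv G (re - 2*ε)) (re - 2*ε) := by
    rw [hFG]
    exact ((hasDerivAt_id _).sub_const _).mul hGd.hasDerivAt
  rw [hDer.deriv]
  have hGval : 1 * G (re - 2*ε) + ((re - 2*ε) - (re - 2*ε)) * deriv G (re - 2*ε)
      = -(2*ε*((rc-re+2*ε)*(3*re+rc-4*ε)) / (q*(re-2*ε)^2)) := by
    rw [hG]
    have h1 : q ≠ 0 := ne_of_gt hqpos
    have h2 : re - 2*ε ≠ 0 := ne_of_gt hrC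
    field_simp
    ring
  rw [hGval]
  have hNpos : 0 < (rc-re+2*ε)*(3*re+rc-4*ε) := by nlinarith
  have habs : |(-(2*ε*((rc-re+2*ε)*(3*re+rc-4*ε)) / (q*(re-2*ε)^2)))|
      = 2*ε*((rc-re+2*ε)*(3*re+rc-4*ε)) / (q*(re-2*ε)^2) := by
    rw [abs_neg, abs_of_nonneg]
    positivity
  rw [habs]
  have hkey : 1/2 * (2*ε*((rc-re+2*ε)*(3*re+rc-4*ε)) / (q*(re-2*ε)^2)) - ε * (N0/Q0) / re^2
      = ε^2 * P ε / ((q*(re-2*ε)^2) * (Q0 * re^2)) := by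
    rw [hq, hP, hQ0, hN0, hS]
    have h2 : re - 2*ε ≠ 0 := ne_of_gt hrC
    have h3 : re ≠ 0 := ne_of_gt h0
    have h4 : (rc ^ 2 + 2 * re * rc + 3 * re ^ 2) ≠ 0 := by positivity
    have h1 : ((re - 2 * ε + re + rc) ^ 2 - ((re - 2 * ε) * re + (re - 2 * ε) * rc + re * rc)) ≠ 0 := by
      rw [← hq]; exact ne_of_gt hqpos
    rw [mul_div_assoc', mul_div_assoc', div_div, div_sub_div _ _ (by simp [h1, h2]) (by simp [h3, h4]), div_eq_div_iff (by simp [h1, h2, h3, h4]) (by simp [h1, h2, h3, h4])]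
    ring
  rw [hkey]
  have hDpos : 0 < (q*(re-2*ε)^2) * (Q0 * re^2) := by positivity
  have hDge : (Q0/2) * (re/2)^2 * (Q0 * re^2) ≤ (q*(re-2*ε)^2) * (Q0 * re^2) := by
    have h1 : (re/2)^2 ≤ (re-2*ε)^2 := by nlinarith
    have h2 : (Q0/2) * (re/2)^2 ≤ q * (re-2*ε)^2 :=
      mul_le_mul hqhalf h1 (by positivity) hqpos.le
    exact mul_le_mul_of_nonneg_right h2 (by positivity)
  have hPbd : |P ε| ≤ M + 1 := by
    have := hM ε ⟨hε0.le, by linarith⟩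
    rw [Real.norm_eq_abs] at this
    linarith
  calc |ε^2 * P ε / ((q*(re-2*ε)^2) * (Q0 * re^2))|
      = ε^2 * |P ε| / ((q*(re-2*ε)^2) * (Q0 * re^2)) := by
        rw [abs_div, abs_of_pos hDpos, abs_mul, abs_of_nonneg (sq_nonneg ε)]
    _ ≤ ε^2 * (M+1) / ((Q0/2) * (re/2)^2 * (Q0 * re^2)) := by
        apply div_le_div₀ (by positivity) _ hdminpos hDge
        exact mul_le_mul_of_nonneg_left hPbd (sq_nonneg ε)
    _ = (M+1) / ((Q0/2) * (re/2)^2 * (Q0 * re^2)) * ε^2 := by ring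
end

section
/- Let 0 < ϰ < 1, r_e > 0, μ ≥ 0, ℓ ∈ ℕ₀, n ∈ ℕ₀, and let p_ℓ(λ) = λ(λ−1) − (ℓ(ℓ+1)+r_e²μ)/ϰ with root λ := λ_ℓ^+(μ) = (1/2)(1 + sqrt(1 + 4(ℓ(ℓ+1)+r_e²μ)/ϰ)). Define, for ρ > 0 and T ∈ ℝ, U(T, ρ) = Σ_{j=0}^{⌈n/2⌉} [n!/((n−2j)! · Π_{m=1}^{j} p_ℓ(λ + 2m))] · ρ^{λ+2j} · (−T)^{n−2j}, where terms with n − 2j < 0 are omitted. Then for every (T,ρ) with ρ > 0, −ρ²∂_T²U(T,ρ) + ρ²∂_ρ²U(T,ρ) − ((ℓ(ℓ+1)+r_e²μ)/ϰ)U(T,ρ) = 0. -/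
open Finset Filter

private lemma negpow_hasDerivAt (k : ℕ) (t : ℝ) :
    HasDerivAt (fun T : ℝ => (-T) ^ k) (-(k : ℝ) * (-t) ^ (k - 1)) t := by
  have h := (hasDerivAt_neg' t).fun_pow k
  exact h.congr_deriv (by ring)

/-- positivity of `p(lam + 2x)` for `x ≥ 1`. -/
private lemma p_pos (q lam : ℝ) (hroot : lam * (lam - 1) = q) (hl : 1 / 2 ≤ lam)
    (x : ℝ) (hx : 1 ≤ x) :
    0 < (lam + 2 * x) * ((lam + 2 * x) - 1) - q := by
  have h1 : (0 : ℝ) < x := by linarith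
  have h2 : (0 : ℝ) < 2 * x + 2 * lam - 1 := by linarith
  nlinarith [mul_pos h1 h2, hroot]

/-- The coefficient recurrence. -/
private lemma rec_id (q lam : ℝ) (hroot : lam * (lam - 1) = q) (hl : 1 / 2 ≤ lam)
    (n j : ℕ) (hj : j < n / 2) :
    ((n.factorial : ℝ) / (((n - 2 * (j + 1)).factorial : ℝ) *
        ∏ m ∈ Finset.Icc 1 (j + 1), ((lam + 2 * (m : ℝ)) * ((lam + 2 * (m : ℝ)) - 1) - q)))
      * ((lam + 2 * ((j : ℝ) + 1)) * ((lam + 2 * ((j : ℝ) + 1)) - 1) - q)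
    = ((n.factorial : ℝ) / (((n - 2 * j).factorial : ℝ) *
        ∏ m ∈ Finset.Icc 1 j, ((lam + 2 * (m : ℝ)) * ((lam + 2 * (m : ℝ)) - 1) - q)))
      * ((n - 2 * j : ℕ) : ℝ) * ((n - 2 * j - 1 : ℕ) : ℝ) := by
  have h2j : 2 * j + 2 ≤ n := by omega
  obtain ⟨k, hk⟩ : ∃ k, n - 2 * j = k + 1 + 1 := ⟨n - 2 * j - 2, by omega⟩
  have hfac : ((n - 2 * j).factorial : ℝ)
      = ((n - 2 * j : ℕ) : ℝ) * ((n - 2 * j - 1 : ℕ) : ℝ) * ((n - 2 * j - 2).factorial : ℝ) := by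
    rw [hk, show k + 1 + 1 - 1 = k + 1 from by omega, show k + 1 + 1 - 2 = k from by omega,
      Nat.factorial_succ, Nat.factorial_succ]
    push_cast; ring
  have hppos := p_pos q lam hroot hl
  have hP : (0 : ℝ) < ∏ m ∈ Finset.Icc 1 j,
      ((lam + 2 * (m : ℝ)) * ((lam + 2 * (m : ℝ)) - 1) - q) := by
    refine Finset.prod_pos fun m hm => hppos m ?_
    have := (Finset.mem_Icc.mp hm).1
    exact_mod_cast this
  have hne1 : ((lam + 2 * ((j : ℝ) + 1)) * ((lam + 2 * ((j : ℝ) + 1)) - 1) - q) ≠ 0 :=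
    (hppos ((j : ℝ) + 1) (by have h : (0:ℝ) ≤ (j:ℝ) := Nat.cast_nonneg j; linarith)).ne'
  have hA : ((n - 2 * j : ℕ) : ℝ) ≠ 0 := Nat.cast_ne_zero.mpr (by omega)
  have hB : ((n - 2 * j - 1 : ℕ) : ℝ) ≠ 0 := Nat.cast_ne_zero.mpr (by omega)
  have hf2 : ((n - 2 * j - 2).factorial : ℝ) ≠ 0 :=
    Nat.cast_ne_zero.mpr (Nat.factorial_ne_zero _)
  rw [show n - 2 * (j + 1) = n - 2 * j - 2 from by omega,
    Finset.prod_Icc_succ_top (Nat.succ_le_succ (Nat.zero_le j)),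
    hfac, show ((j + 1 : ℕ) : ℝ) = (j : ℝ) + 1 from by push_cast; ring]
  field_simp

private lemma aux2 (q lam : ℝ) (hroot : lam * (lam - 1) = q) (n : ℕ) (c : ℕ → ℝ)
    (hrec : ∀ j, j < n / 2 →
      c (j + 1) * ((lam + 2 * ((j : ℝ) + 1)) * ((lam + 2 * ((j : ℝ) + 1)) - 1) - q)
        = c j * ((n - 2 * j : ℕ) : ℝ) * ((n - 2 * j - 1 : ℕ) : ℝ))
    (T ρ : ℝ) (hρ : 0 < ρ) :
    -(ρ ^ 2) * deriv (fun T' => deriv (fun T'' => ∑ j ∈ Finset.range (n / 2 + 1),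
          c j * ρ ^ (lam + 2 * (j : ℝ)) * (-T'') ^ (n - 2 * j)) T') T
      + ρ ^ 2 * deriv (fun ρ' => deriv (fun ρ'' => ∑ j ∈ Finset.range (n / 2 + 1),
          c j * ρ'' ^ (lam + 2 * (j : ℝ)) * (-T) ^ (n - 2 * j)) ρ') ρ
      - q * ∑ j ∈ Finset.range (n / 2 + 1),
          c j * ρ ^ (lam + 2 * (j : ℝ)) * (-T) ^ (n - 2 * j) = 0 := by
  -- T derivatives
  have hT1 : ∀ t : ℝ, HasDerivAt (fun T'' => ∑ j ∈ Finset.range (n / 2 + 1),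
      c j * ρ ^ (lam + 2 * (j : ℝ)) * (-T'') ^ (n - 2 * j))
      (∑ j ∈ Finset.range (n / 2 + 1),
        c j * ρ ^ (lam + 2 * (j : ℝ)) *
          (-((n - 2 * j : ℕ) : ℝ) * (-t) ^ (n - 2 * j - 1))) t := fun t =>
    HasDerivAt.fun_sum fun j _ => HasDerivAt.const_mul _ (negpow_hasDerivAt (n - 2 * j) t)
  have hT2 : HasDerivAt (fun t : ℝ => ∑ j ∈ Finset.range (n / 2 + 1),
      c j * ρ ^ (lam + 2 * (j : ℝ)) *
        (-((n - 2 * j : ℕ) : ℝ) * (-t) ^ (n - 2 * j - 1)))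
      (∑ j ∈ Finset.range (n / 2 + 1),
        c j * ρ ^ (lam + 2 * (j : ℝ)) *
          (-((n - 2 * j : ℕ) : ℝ) *
            (-((n - 2 * j - 1 : ℕ) : ℝ) * (-T) ^ (n - 2 * j - 1 - 1)))) T :=
    HasDerivAt.fun_sum fun j _ =>
      HasDerivAt.const_mul _ (HasDerivAt.const_mul _ (negpow_hasDerivAt (n - 2 * j - 1) T))
  have hDT : deriv (fun T' => deriv (fun T'' => ∑ j ∈ Finset.range (n / 2 + 1),
      c j * ρ ^ (lam + 2 * (j : ℝ)) * (-T'') ^ (n - 2 * j)) T') T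
      = ∑ j ∈ Finset.range (n / 2 + 1),
        c j * ρ ^ (lam + 2 * (j : ℝ)) *
          (-((n - 2 * j : ℕ) : ℝ) *
            (-((n - 2 * j - 1 : ℕ) : ℝ) * (-T) ^ (n - 2 * j - 1 - 1))) := by
    have h := funext fun t => (hT1 t).deriv
    rw [h]
    exact hT2.deriv
  -- ρ derivatives
  have hR1 : ∀ x : ℝ, 0 < x → HasDerivAt (fun ρ'' => ∑ j ∈ Finset.range (n / 2 + 1),
      c j * ρ'' ^ (lam + 2 * (j : ℝ)) * (-T) ^ (n - 2 * j))
      (∑ j ∈ Finset.range (n / 2 + 1),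
        c j * ((lam + 2 * (j : ℝ)) * x ^ (lam + 2 * (j : ℝ) - 1)) * (-T) ^ (n - 2 * j)) x :=
    fun x hx => HasDerivAt.fun_sum fun j _ =>
      (HasDerivAt.const_mul (c j) (Real.hasDerivAt_rpow_const (Or.inl hx.ne'))).mul_const _
  have hR2 : HasDerivAt (fun x : ℝ => ∑ j ∈ Finset.range (n / 2 + 1),
      c j * ((lam + 2 * (j : ℝ)) * x ^ (lam + 2 * (j : ℝ) - 1)) * (-T) ^ (n - 2 * j))
      (∑ j ∈ Finset.range (n / 2 + 1),
        c j * ((lam + 2 * (j : ℝ)) *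
          ((lam + 2 * (j : ℝ) - 1) * ρ ^ (lam + 2 * (j : ℝ) - 1 - 1))) * (-T) ^ (n - 2 * j)) ρ :=
    HasDerivAt.fun_sum fun j _ =>
      (HasDerivAt.const_mul (c j)
        (HasDerivAt.const_mul _ (Real.hasDerivAt_rpow_const (Or.inl hρ.ne')))).mul_const _
  have hDR : deriv (fun ρ' => deriv (fun ρ'' => ∑ j ∈ Finset.range (n / 2 + 1),
      c j * ρ'' ^ (lam + 2 * (j : ℝ)) * (-T) ^ (n - 2 * j)) ρ') ρ
      = ∑ j ∈ Finset.range (n / 2 + 1),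
        c j * ((lam + 2 * (j : ℝ)) *
          ((lam + 2 * (j : ℝ) - 1) * ρ ^ (lam + 2 * (j : ℝ) - 1 - 1))) * (-T) ^ (n - 2 * j) := by
    have hEq : (fun ρ' => deriv (fun ρ'' => ∑ j ∈ Finset.range (n / 2 + 1),
        c j * ρ'' ^ (lam + 2 * (j : ℝ)) * (-T) ^ (n - 2 * j)) ρ') =ᶠ[nhds ρ]
        (fun x => ∑ j ∈ Finset.range (n / 2 + 1),
          c j * ((lam + 2 * (j : ℝ)) * x ^ (lam + 2 * (j : ℝ) - 1)) * (-T) ^ (n - 2 * j)) := by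
      filter_upwards [eventually_gt_nhds hρ] with x hx
      exact (hR1 x hx).deriv
    rw [hEq.deriv_eq]
    exact hR2.deriv
  rw [hDT, hDR]
  have hmul : ∀ x : ℝ, ρ ^ 2 * ρ ^ x = ρ ^ (x + 2) := by
    intro x
    rw [← Real.rpow_natCast ρ 2, ← Real.rpow_add hρ]
    norm_num [add_comm]
  have e1 : ρ ^ 2 * (∑ j ∈ Finset.range (n / 2 + 1),
        c j * ((lam + 2 * (j : ℝ)) *
          ((lam + 2 * (j : ℝ) - 1) * ρ ^ (lam + 2 * (j : ℝ) - 1 - 1))) * (-T) ^ (n - 2 * j))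
      - q * ∑ j ∈ Finset.range (n / 2 + 1),
          c j * ρ ^ (lam + 2 * (j : ℝ)) * (-T) ^ (n - 2 * j)
      = ∑ j ∈ Finset.range (n / 2 + 1),
          c j * ((lam + 2 * (j : ℝ)) * ((lam + 2 * (j : ℝ)) - 1) - q) *
            ρ ^ (lam + 2 * (j : ℝ)) * (-T) ^ (n - 2 * j) := by
    rw [Finset.mul_sum, Finset.mul_sum, ← Finset.sum_sub_distrib]
    refine Finset.sum_congr rfl fun j _ => ?_
    have h2 : ρ ^ 2 * ρ ^ (lam + 2 * (j : ℝ) - 1 - 1) = ρ ^ (lam + 2 * (j : ℝ)) := by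
      rw [hmul]; congr 1; ring
    linear_combination (c j * (lam + 2 * (j : ℝ)) * ((lam + 2 * (j : ℝ)) - 1) *
      (-T) ^ (n - 2 * j)) * h2
  have e2 : ρ ^ 2 * (∑ j ∈ Finset.range (n / 2 + 1),
        c j * ρ ^ (lam + 2 * (j : ℝ)) *
          (-((n - 2 * j : ℕ) : ℝ) *
            (-((n - 2 * j - 1 : ℕ) : ℝ) * (-T) ^ (n - 2 * j - 1 - 1))))
      = ∑ j ∈ Finset.range (n / 2 + 1),
          c j * ((n - 2 * j : ℕ) : ℝ) * ((n - 2 * j - 1 : ℕ) : ℝ) *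
            ρ ^ (lam + 2 * (j : ℝ) + 2) * (-T) ^ (n - 2 * j - 2) := by
    rw [Finset.mul_sum]
    refine Finset.sum_congr rfl fun j _ => ?_
    rw [show n - 2 * j - 1 - 1 = n - 2 * j - 2 from by omega]
    linear_combination (c j * ((n - 2 * j : ℕ) : ℝ) * ((n - 2 * j - 1 : ℕ) : ℝ) *
      (-T) ^ (n - 2 * j - 2)) * hmul (lam + 2 * (j : ℝ))
  have key : ∑ j ∈ Finset.range (n / 2 + 1),
        c j * ((lam + 2 * (j : ℝ)) * ((lam + 2 * (j : ℝ)) - 1) - q) *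
          ρ ^ (lam + 2 * (j : ℝ)) * (-T) ^ (n - 2 * j)
      = ∑ j ∈ Finset.range (n / 2 + 1),
          c j * ((n - 2 * j : ℕ) : ℝ) * ((n - 2 * j - 1 : ℕ) : ℝ) *
            ρ ^ (lam + 2 * (j : ℝ) + 2) * (-T) ^ (n - 2 * j - 2) := by
    rw [Finset.sum_range_succ', Finset.sum_range_succ]
    have hzero : c 0 * ((lam + 2 * ((0 : ℕ) : ℝ)) * ((lam + 2 * ((0 : ℕ) : ℝ)) - 1) - q) *
        ρ ^ (lam + 2 * ((0 : ℕ) : ℝ)) * (-T) ^ (n - 2 * 0) = 0 := by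
      have h0 : lam + 2 * ((0 : ℕ) : ℝ) = lam := by norm_num
      rw [h0, sub_eq_zero_of_eq hroot]
      ring
    have hlast : c (n / 2) * ((n - 2 * (n / 2) : ℕ) : ℝ) * ((n - 2 * (n / 2) - 1 : ℕ) : ℝ) *
        ρ ^ (lam + 2 * ((n / 2 : ℕ) : ℝ) + 2) * (-T) ^ (n - 2 * (n / 2) - 2) = 0 := by
      rcases (show n - 2 * (n / 2) = 0 ∨ n - 2 * (n / 2) - 1 = 0 from by omega) with h | h <;>
        rw [h] <;> simp
    rw [hzero, hlast, add_zero, add_zero]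
    refine Finset.sum_congr rfl fun j hj => ?_
    have hj' : j < n / 2 := Finset.mem_range.mp hj
    rw [show n - 2 * (j + 1) = n - 2 * j - 2 from by omega,
      show ((j + 1 : ℕ) : ℝ) = (j : ℝ) + 1 from by push_cast; ring,
      show lam + 2 * ((j : ℝ) + 1) = lam + 2 * (j : ℝ) + 2 from by ring]
    linear_combination (ρ ^ (lam + 2 * (j : ℝ) + 2) * (-T) ^ (n - 2 * j - 2)) * hrec j hj'
  rw [neg_mul, e2, add_sub_assoc, e1, key]
  ring

/-- The explicit finite sum `U(T,ρ)` solves the separated massive wave equation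
`−ρ²∂_T²U + ρ²∂_ρ²U − ((ℓ(ℓ+1)+r_e²μ)/ϰ) U = 0` on `{ρ > 0}`. -/
theorem ads2_separated_solution (ϰ re μ : ℝ) (hϰ0 : 0 < ϰ) (hϰ1 : ϰ < 1)
    (hre : 0 < re) (hμ : 0 ≤ μ) (ℓ n : ℕ) :
    let q := ((ℓ : ℝ) * (ℓ + 1) + re ^ 2 * μ) / ϰ
    let lam := (1 / 2) * (1 + Real.sqrt (1 + 4 * q))
    let p := fun x : ℝ => x * (x - 1) - q
    let U := fun (T ρ : ℝ) => ∑ j ∈ Finset.range (n / 2 + 1),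
      ((n.factorial : ℝ) /
          (((n - 2 * j).factorial : ℝ) * ∏ m ∈ Finset.Icc 1 j, p (lam + 2 * (m : ℝ)))) *
        ρ ^ (lam + 2 * (j : ℝ)) * (-T) ^ (n - 2 * j)
    ∀ T ρ : ℝ, 0 < ρ →
      -(ρ ^ 2) * deriv (fun T' => deriv (fun T'' => U T'' ρ) T') T
        + ρ ^ 2 * deriv (fun ρ' => deriv (fun ρ'' => U T ρ'') ρ') ρ
        - q * U T ρ = 0 := by
  intro q lam p U T ρ hρ
  have hq0 : (0 : ℝ) ≤ q := by
    have h1 : (0 : ℝ) ≤ (ℓ : ℝ) * ((ℓ : ℝ) + 1) + re ^ 2 * μ := by positivity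
    exact div_nonneg h1 hϰ0.le
  have hs : Real.sqrt (1 + 4 * q) ^ 2 = 1 + 4 * q := Real.sq_sqrt (by linarith)
  have hlam : lam = (1 / 2) * (1 + Real.sqrt (1 + 4 * q)) := rfl
  have hroot : lam * (lam - 1) = q := by
    rw [hlam]
    linear_combination hs / 4
  have hl : 1 / 2 ≤ lam := by
    have := Real.sqrt_nonneg (1 + 4 * q)
    rw [hlam]
    linarith
  exact aux2 q lam hroot n
    (fun j => (n.factorial : ℝ) /
      (((n - 2 * j).factorial : ℝ) * ∏ m ∈ Finset.Icc 1 j, p (lam + 2 * (m : ℝ))))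
    (fun j hj => rec_id q lam hroot hl n j hj) T ρ hρ
end
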